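/- For fixed probability densities p and q on a measure space, the quantity (α/(1-α))·log ∫ p·q^(α-1) dμ − (1/(1-α))·log ∫ p^α dμ + log ∫ q^α dμ tends to ∫ p·log(p/q) dμ (the Kullback–Leibler divergence) as α → 1. -/

import Mathlib

/-!
Write `F α = ∫ p q^(α-1)`, `G α = ∫ p^α`, `H α = ∫ q^α`; all three equal `1` at `α = 1`.
Hence `log F α / (1 - α)` and `log G α / (1 - α)` are difference quotients of `log F` and
`log G` at `1`, converging to `-F'(1) = -∫ p log q` and `-G'(1) = -∫ p log p`, while
`log H α → 0`. The limit is therefore `∫ p log p - ∫ p log q`, which is the Kullback–Leibler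
divergence once `p log q` is known to be integrable; that follows from
`|log t| ≤ (t^δ + t^(-δ)) / δ` and the finiteness of `F` near `1`.
-/

open MeasureTheory Filter Topology

namespace Real

lemma abs_log_le_rpow_add_rpow_neg_div {t δ : ℝ} (ht : 0 ≤ t) (hδ : 0 < δ) :
    |log t| ≤ (t ^ δ + t ^ (-δ)) / δ := by
  have h_le : log t ≤ t ^ δ / δ := log_le_rpow_div ht hδ
  have h_neg_le : -log t ≤ t ^ (-δ) / δ := by
    simpa [log_inv, inv_rpow ht, rpow_neg ht] using log_le_rpow_div (inv_nonneg.mpr ht) hδ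
  have : 0 ≤ t ^ δ / δ := by positivity
  have : 0 ≤ t ^ (-δ) / δ := by positivity
  rw [abs_le, add_div]
  constructor <;> linarith

end Real

lemma Filter.Eventually.exists_pos_and_neg_of_nhds_zero {P : ℝ → Prop}
    (h : ∀ᶠ s in 𝓝 0, P s) : ∃ δ, 0 < δ ∧ P δ ∧ P (-δ) := by
  have h_neg : ∀ᶠ s in 𝓝 (0 : ℝ), P (-s) :=
    (continuous_neg.tendsto' 0 0 neg_zero).eventually h
  have h_right : ∀ᶠ s in 𝓝[>] (0 : ℝ), 0 < s ∧ P s ∧ P (-s) :=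
    (eventually_mem_nhdsWithin (s := Set.Ioi 0)).and (nhdsWithin_le_nhds (h.and h_neg))
  exact h_right.exists

lemma MeasureTheory.Integrable.mul_log_of_eventually_mul_rpow {X : Type*}
    [MeasurableSpace X] {μ : Measure X} {p f : X → ℝ}
    (hm : AEStronglyMeasurable (fun x => p x * Real.log (f x)) μ)
    (hp : ∀ x, 0 ≤ p x) (hf : ∀ x, 0 ≤ f x)
    (h : ∀ᶠ s in 𝓝 (0 : ℝ), Integrable (fun x => p x * f x ^ s) μ) :
    Integrable (fun x => p x * Real.log (f x)) μ := by
  obtain ⟨δ, hδ, h_pos, h_neg⟩ := h.exists_pos_and_neg_of_nhds_zero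
  refine ((h_pos.add h_neg).div_const δ).mono hm (Eventually.of_forall fun x => ?_)
  calc ‖p x * Real.log (f x)‖ = p x * |Real.log (f x)| := by
        rw [Real.norm_eq_abs, abs_mul, abs_of_nonneg (hp x)]
    _ ≤ p x * ((f x ^ δ + f x ^ (-δ)) / δ) :=
        mul_le_mul_of_nonneg_left (Real.abs_log_le_rpow_add_rpow_neg_div (hf x) hδ) (hp x)
    _ = (p x * f x ^ δ + p x * f x ^ (-δ)) / δ := by ring
    _ ≤ ‖(p x * f x ^ δ + p x * f x ^ (-δ)) / δ‖ := le_abs_self _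

lemma mul_log_div_eq_of_pos_iff {a b : ℝ} (ha : 0 ≤ a) (hab : 0 < a ↔ 0 < b) :
    a * Real.log (a / b) = a * Real.log a - a * Real.log b := by
  rcases ha.eq_or_lt with rfl | ha
  · simp
  · rw [Real.log_div ha.ne' (hab.mp ha).ne']
    ring

lemma tendsto_div_one_sub_of_hasDerivAt {φ : ℝ → ℝ} {a : ℝ} (h1 : φ 1 = 0)
    (hφ : HasDerivAt φ a 1) : Tendsto (fun α => φ α / (1 - α)) (𝓝[≠] 1) (𝓝 (-a)) := by
  refine hφ.tendsto_slope.neg.congr' ?_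
  filter_upwards [self_mem_nhdsWithin] with α hα
  rw [slope_def_field, h1, sub_zero, ← div_neg, neg_sub]

lemma hasDerivAt_log_of_eq_one {f : ℝ → ℝ} {a x : ℝ} (hx : f x = 1) (hf : HasDerivAt f a x) :
    HasDerivAt (fun α => Real.log (f α)) a x := by
  simpa [hx] using hf.log (by simp [hx])

lemma tendsto_mul_log_div_one_sub {f g h : ℝ → ℝ} {a b : ℝ} (hf1 : f 1 = 1) (hg1 : g 1 = 1)
    (hh1 : h 1 = 1) (hf : HasDerivAt f a 1) (hg : HasDerivAt g b 1) (hh : ContinuousAt h 1) :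
    Tendsto (fun α => α / (1 - α) * Real.log (f α) - 1 / (1 - α) * Real.log (g α)
      + Real.log (h α)) (𝓝[≠] 1) (𝓝 (b - a)) := by
  have hF := tendsto_div_one_sub_of_hasDerivAt (by simp [hf1]) (hasDerivAt_log_of_eq_one hf1 hf)
  have hG := tendsto_div_one_sub_of_hasDerivAt (by simp [hg1]) (hasDerivAt_log_of_eq_one hg1 hg)
  have hH : Tendsto (fun α => Real.log (h α)) (𝓝[≠] 1) (𝓝 0) := by
    simpa [Function.comp_def, hh1] using
      ((Real.continuousAt_log (by simp [hh1])).comp hh).tendsto.mono_left nhdsWithin_le_nhds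
  have hα : Tendsto (fun α : ℝ => α) (𝓝[≠] 1) (𝓝 1) :=
    tendsto_nhdsWithin_of_tendsto_nhds tendsto_id
  convert ((hα.mul hF).sub hG).add hH using 2
  · ring
  · ring

theorem relative_alpha_entropy_tendsto_KL_general
    {X : Type*} [MeasurableSpace X] (μ : Measure X)
    (p q : X → ℝ)
    (hpm : Measurable p) (hqm : Measurable q)
    (hp0 : ∀ x, 0 ≤ p x) (hq0 : ∀ x, 0 ≤ q x)
    (hp1 : ∫ x, p x ∂μ = 1) (hq1 : ∫ x, q x ∂μ = 1)
    (hsupp : ∀ x, 0 < p x ↔ 0 < q x)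
    (hI1 : ∀ᶠ α in nhds (1 : ℝ), Integrable (fun x => p x * q x ^ (α - 1)) μ)
    (hD1 : ∀ᶠ α in nhds (1 : ℝ),
      DifferentiableAt ℝ (fun β : ℝ => ∫ x, p x * q x ^ (β - 1) ∂μ) α)
    (hD2 : ∀ᶠ α in nhds (1 : ℝ),
      DifferentiableAt ℝ (fun β : ℝ => ∫ x, p x ^ β ∂μ) α)
    (hD3 : ∀ᶠ α in nhds (1 : ℝ),
      DifferentiableAt ℝ (fun β : ℝ => ∫ x, q x ^ β ∂μ) α)
    (hswap1 : ∀ᶠ α in nhds (1 : ℝ),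
      deriv (fun β : ℝ => ∫ x, p x * q x ^ (β - 1) ∂μ) α
        = ∫ x, p x * (q x ^ (α - 1) * Real.log (q x)) ∂μ)
    (hswap2 : ∀ᶠ α in nhds (1 : ℝ),
      deriv (fun β : ℝ => ∫ x, p x ^ β ∂μ) α = ∫ x, p x ^ α * Real.log (p x) ∂μ)
    (hKL : Integrable (fun x => p x * Real.log (p x / q x)) μ) :
    Tendsto (fun α : ℝ =>
        (α / (1 - α)) * Real.log (∫ x, p x * q x ^ (α - 1) ∂μ)
          - (1 / (1 - α)) * Real.log (∫ x, p x ^ α ∂μ)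
          + Real.log (∫ x, q x ^ α ∂μ))
      (nhdsWithin (1 : ℝ) {1}ᶜ)
      (nhds (∫ x, p x * Real.log (p x / q x) ∂μ)) := by
  have hKL_eq :
      ∀ x, p x * Real.log (p x / q x) = p x * Real.log (p x) - p x * Real.log (q x) :=
    fun x => mul_log_div_eq_of_pos_iff (hp0 x) (hsupp x)
  have h_logq : Integrable (fun x => p x * Real.log (q x)) μ := by
    refine .mul_log_of_eventually_mul_rpow
      (hpm.mul (Real.measurable_log.comp hqm)).aestronglyMeasurable hp0 hq0 ?_
    have h_shift : Tendsto (1 + ·) (𝓝 (0 : ℝ)) (𝓝 1) :=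
      (continuous_const_add 1).tendsto' 0 1 (add_zero 1)
    simpa using h_shift.eventually hI1
  have h_logp : Integrable (fun x => p x * Real.log (p x)) μ :=
    (hKL.add h_logq).congr <| .of_forall fun x => by simp only [Pi.add_apply, hKL_eq]; ring
  have hF : HasDerivAt (fun β : ℝ => ∫ x, p x * q x ^ (β - 1) ∂μ)
      (∫ x, p x * Real.log (q x) ∂μ) 1 := by
    simpa [hswap1.self_of_nhds] using hD1.self_of_nhds.hasDerivAt
  have hG : HasDerivAt (fun β : ℝ => ∫ x, p x ^ β ∂μ)
      (∫ x, p x * Real.log (p x) ∂μ) 1 := by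
    simpa [hswap2.self_of_nhds] using hD2.self_of_nhds.hasDerivAt
  rw [integral_congr_ae (Eventually.of_forall hKL_eq), integral_sub h_logp h_logq]
  exact tendsto_mul_log_div_one_sub (by simpa using hp1) (by simpa using hp1)
    (by simpa using hq1) hF hG hD3.self_of_nhds.continuousAt

/-- As α → 1, the relative α-entropy of fixed probability densities `p`, `q` tends to the
Kullback–Leibler divergence `∫ p log(p/q)`. -/
theorem relative_alpha_entropy_tendsto_KL
    {X : Type*} [MeasurableSpace X] (μ : Measure X)
    (p q : X → ℝ)
    (hpm : Measurable p) (hqm : Measurable q)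
    (hp0 : ∀ x, 0 ≤ p x) (hq0 : ∀ x, 0 ≤ q x)
    (hp1 : ∫ x, p x ∂μ = 1) (hq1 : ∫ x, q x ∂μ = 1)
    (hsupp : ∀ x, 0 < p x ↔ 0 < q x)
    (hI1 : ∀ᶠ α in nhds (1 : ℝ), Integrable (fun x => p x * q x ^ (α - 1)) μ)
    (hI2 : ∀ᶠ α in nhds (1 : ℝ), Integrable (fun x => p x ^ α) μ)
    (hI3 : ∀ᶠ α in nhds (1 : ℝ), Integrable (fun x => q x ^ α) μ)
    (hD1 : ∀ᶠ α in nhds (1 : ℝ),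
      DifferentiableAt ℝ (fun β : ℝ => ∫ x, p x * q x ^ (β - 1) ∂μ) α)
    (hD2 : ∀ᶠ α in nhds (1 : ℝ),
      DifferentiableAt ℝ (fun β : ℝ => ∫ x, p x ^ β ∂μ) α)
    (hD3 : ∀ᶠ α in nhds (1 : ℝ),
      DifferentiableAt ℝ (fun β : ℝ => ∫ x, q x ^ β ∂μ) α)
    (hswap1 : ∀ᶠ α in nhds (1 : ℝ),
      deriv (fun β : ℝ => ∫ x, p x * q x ^ (β - 1) ∂μ) α
        = ∫ x, p x * (q x ^ (α - 1) * Real.log (q x)) ∂μ)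
    (hswap2 : ∀ᶠ α in nhds (1 : ℝ),
      deriv (fun β : ℝ => ∫ x, p x ^ β ∂μ) α = ∫ x, p x ^ α * Real.log (p x) ∂μ)
    (hswap3 : ∀ᶠ α in nhds (1 : ℝ),
      deriv (fun β : ℝ => ∫ x, q x ^ β ∂μ) α = ∫ x, q x ^ α * Real.log (q x) ∂μ)
    (hKL : Integrable (fun x => p x * Real.log (p x / q x)) μ) :
    Tendsto (fun α : ℝ =>
        (α / (1 - α)) * Real.log (∫ x, p x * q x ^ (α - 1) ∂μ)
          - (1 / (1 - α)) * Real.log (∫ x, p x ^ α ∂μ)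
          + Real.log (∫ x, q x ^ α ∂μ))
      (nhdsWithin (1 : ℝ) {1}ᶜ)
      (nhds (∫ x, p x * Real.log (p x / q x) ∂μ)) :=
  relative_alpha_entropy_tendsto_KL_general μ p q hpm hqm hp0 hq0 hp1 hq1 hsupp hI1 hD1 hD2 hD3
    hswap1 hswap2 hKL
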